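/- arXiv:2205.03626 — 7 statements merged into one kernel-verified Lean document; each statement's English description precedes it below -/
import Mathlib

section
/- Let β ∈ (0,1) and let S ⊆ ℤ² be β-separated-covering. Then there exist r₀ > 0 and α₀ > 0 such that for every r > r₀ and every x ∈ ℝ², the set S ∩ B(x,r) is finite and card(S ∩ B(x,r)) ≤ α₀ · r^{2−2β}. -/
/-- The canonical embedding of `ℤ²` into the Euclidean plane. -/
noncomputable def embed2 (s : ℤ × ℤ) : EuclideanSpace ℝ (Fin 2) :=
  (WithLp.equiv 2 (Fin 2 → ℝ)).symm ![(s.1 : ℝ), (s.2 : ℝ)]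

/-- A set `S ⊆ ℤ²` is `β`-separated-covering if it contains `(0,0)`, every point of `S`
has even coordinate sum, distinct points `s, s'` of `S` satisfy
`|s - s'| ≥ |s|^β + |s'|^β`, and every `x ∈ ℝ²` admits `s ∈ S` with
`|x - s| ≤ |s|^β + (|x|+1)^β + 1`. -/
def SepCov (β : ℝ) (S : Set (ℤ × ℤ)) : Prop :=
  ((0, 0) : ℤ × ℤ) ∈ S ∧
  (∀ s ∈ S, Even (s.1 + s.2)) ∧
  (∀ s ∈ S, ∀ s' ∈ S, s ≠ s' →
    ‖embed2 s - embed2 s'‖ ≥ ‖embed2 s‖ ^ β + ‖embed2 s'‖ ^ β) ∧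
  (∀ x : EuclideanSpace ℝ (Fin 2), ∃ s ∈ S,
    ‖x - embed2 s‖ ≤ ‖embed2 s‖ ^ β + (‖x‖ + 1) ^ β + 1)

/-!
Points of a `β`-separated set of norm at least `ρ` are `2ρ^β`-separated, so comparing volumes
of disjoint balls bounds how many of them lie in a ball of radius `cρ` by `(c+1)^d ρ^(d(1-β))`.
Near the origin `β < 1` leaves room for at most one point, and over the dyadic annuli
`2^n ≤ ‖s‖ < 2^(n+1)` these bounds form a geometric series dominated by its last term.
A ball `B(x, r)` then splits into its points of norm below `2r` and those of norm at least `r`.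
-/

open Metric MeasureTheory Module

section Packing

variable {E : Type*} [NormedAddCommGroup E] [NormedSpace ℝ E] [FiniteDimensional ℝ E]

theorem Finset.card_le_of_pairwise_le_dist {t : Finset E} {x : E} {R δ : ℝ} (hR : 0 ≤ R)
    (hδ : 0 < δ) (ht : (t : Set E) ⊆ closedBall x R)
    (hsep : (t : Set E).Pairwise (2 * δ ≤ dist · ·)) :
    (t.card : ℝ) ≤ ((R + δ) / δ) ^ finrank ℝ E := by
  borelize E
  set μ : Measure E := Measure.addHaar
  set d := finrank ℝ E
  have hdisj : (t : Set E).PairwiseDisjoint (ball · δ) := fun s hs s' hs' hne =>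
    ball_disjoint_ball (by linarith [hsep hs hs' hne])
  have hsub : ⋃ s ∈ t, ball s δ ⊆ ball x (R + δ) := Set.iUnion₂_subset fun s hs =>
    ball_subset_ball' (by linarith [mem_closedBall.1 (ht hs)])
  have hvol : ENNReal.ofReal (t.card * δ ^ d) * μ (ball 0 1) ≤
      ENNReal.ofReal ((R + δ) ^ d) * μ (ball 0 1) :=
    calc ENNReal.ofReal (t.card * δ ^ d) * μ (ball 0 1) = μ (⋃ s ∈ t, ball s δ) := by
          rw [measure_biUnion_finset hdisj fun _ _ => measurableSet_ball,
            ENNReal.ofReal_mul (Nat.cast_nonneg _), ENNReal.ofReal_natCast]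
          simp [μ.addHaar_ball_of_pos _ hδ, mul_assoc, d]
      _ ≤ μ (ball x (R + δ)) := measure_mono hsub
      _ = ENNReal.ofReal ((R + δ) ^ d) * μ (ball 0 1) := μ.addHaar_ball_of_pos _ (by positivity)
  have hcard : t.card * δ ^ d ≤ (R + δ) ^ d := by
    rwa [ENNReal.mul_le_mul_iff_left (measure_ball_pos _ _ zero_lt_one).ne'
      measure_ball_lt_top.ne, ENNReal.ofReal_le_ofReal_iff (by positivity)] at hvol
  rwa [div_pow, le_div_iff₀ (by positivity)]

theorem Set.finite_and_ncard_le_of_pairwise_le_dist {S : Set E} {x : E} {R δ : ℝ} (hR : 0 ≤ R)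
    (hδ : 0 < δ) (hS : S ⊆ closedBall x R) (hsep : S.Pairwise (2 * δ ≤ dist · ·)) :
    S.Finite ∧ (S.ncard : ℝ) ≤ ((R + δ) / δ) ^ finrank ℝ E := by
  have hbound : ∀ t : Finset E, (t : Set E) ⊆ S → (t.card : ℝ) ≤ ((R + δ) / δ) ^ finrank ℝ E :=
    fun t htS => Finset.card_le_of_pairwise_le_dist hR hδ (htS.trans hS) (hsep.mono htS)
  have hfin : S.Finite := by
    by_contra hinf
    obtain ⟨t, htS, htcard⟩ := Set.Infinite.exists_subset_card_eq hinf
      (⌈((R + δ) / δ) ^ finrank ℝ E⌉₊ + 1)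
    have := hbound t htS
    rw [htcard, Nat.cast_add_one] at this
    linarith [Nat.le_ceil (((R + δ) / δ) ^ finrank ℝ E)]
  refine ⟨hfin, ?_⟩
  rw [Set.ncard_eq_toFinset_card S hfin]
  exact hbound _ (by simp)

end Packing

def IsPowSeparated {E : Type*} [NormedAddCommGroup E] (β : ℝ) (S : Set E) : Prop :=
  S.Pairwise fun s s' => ‖s‖ ^ β + ‖s'‖ ^ β ≤ dist s s'

namespace IsPowSeparated

variable {E : Type*} [NormedAddCommGroup E] {β : ℝ} {S : Set E}

theorem subsingleton_norm_lt_one (hS : IsPowSeparated β S) (hβ : β < 1) :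
    {s ∈ S | ‖s‖ < 1}.Subsingleton := by
  have hle : ∀ {u : E}, ‖u‖ < 1 → ‖u‖ ≤ ‖u‖ ^ β := fun hu =>
    Real.self_le_rpow_of_le_one (norm_nonneg _) hu.le hβ.le
  have hlt : ∀ {u : E}, ‖u‖ < 1 → u ≠ 0 → ‖u‖ < ‖u‖ ^ β := fun hu hu0 =>
    Real.self_lt_rpow_of_lt_one (norm_pos_iff.2 hu0) hu hβ
  intro s ⟨hs, hs1⟩ s' ⟨hs', hs1'⟩
  by_contra hne
  have hsep := hS hs hs' hne
  have htri := dist_le_norm_add_norm s s'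
  -- a point of norm in `(0, 1)` is farther from any other point than the triangle inequality allows
  rcases eq_or_ne s 0 with rfl | hs0
  · linarith [hle hs1, hlt hs1' (Ne.symm hne)]
  · linarith [hlt hs1 hs0, hle hs1']

variable [NormedSpace ℝ E] [FiniteDimensional ℝ E]

theorem finite_and_ncard_annulus_le (hS : IsPowSeparated β S) (hβ0 : 0 ≤ β) (hβ1 : β ≤ 1)
    {ρ c : ℝ} (hρ : 1 ≤ ρ) (hc : 0 ≤ c) (x : E) :
    {s ∈ S | ρ ≤ ‖s‖ ∧ dist s x ≤ c * ρ}.Finite ∧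
      ({s ∈ S | ρ ≤ ‖s‖ ∧ dist s x ≤ c * ρ}.ncard : ℝ) ≤
        (c + 1) ^ finrank ℝ E * (ρ ^ (1 - β)) ^ finrank ℝ E := by
  have hρ0 : 0 < ρ := by linarith
  have hsep : {s ∈ S | ρ ≤ ‖s‖ ∧ dist s x ≤ c * ρ}.Pairwise (2 * ρ ^ β ≤ dist · ·) :=
    fun s hs s' hs' hne => by
      have h := Real.rpow_le_rpow hρ0.le hs.2.1 hβ0
      have h' := Real.rpow_le_rpow hρ0.le hs'.2.1 hβ0
      linarith [hS hs.1 hs'.1 hne]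
  obtain ⟨hfin, hcard⟩ := Set.finite_and_ncard_le_of_pairwise_le_dist (by positivity)
    (Real.rpow_pos_of_pos hρ0 β) (fun s hs => mem_closedBall.2 hs.2.2) hsep
  refine ⟨hfin, hcard.trans ?_⟩
  rw [← mul_pow]
  have hratio : (c * ρ + ρ ^ β) / ρ ^ β = c * ρ ^ (1 - β) + 1 := by
    rw [Real.rpow_sub hρ0, Real.rpow_one]
    field_simp
  have hone : 1 ≤ ρ ^ (1 - β) := Real.one_le_rpow hρ (by linarith)
  rw [hratio]
  gcongr
  linarith

theorem finite_and_ncard_norm_lt_two_mul_le (hS : IsPowSeparated β S) (hβ0 : 0 ≤ β)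
    (hβ1 : β ≤ 1) {ρ : ℝ} (hρ : 1 ≤ ρ) (hfin : {s ∈ S | ‖s‖ < ρ}.Finite) :
    {s ∈ S | ‖s‖ < 2 * ρ}.Finite ∧ ({s ∈ S | ‖s‖ < 2 * ρ}.ncard : ℝ) ≤
      {s ∈ S | ‖s‖ < ρ}.ncard + 3 ^ finrank ℝ E * (ρ ^ (1 - β)) ^ finrank ℝ E := by
  have hsplit : {s ∈ S | ‖s‖ < 2 * ρ} ⊆
      {s ∈ S | ‖s‖ < ρ} ∪ {s ∈ S | ρ ≤ ‖s‖ ∧ dist s 0 ≤ 2 * ρ} := by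
    rintro s ⟨hs, hsρ⟩
    by_cases h : ‖s‖ < ρ
    · exact Or.inl ⟨hs, h⟩
    · exact Or.inr ⟨hs, not_lt.1 h, by rw [dist_zero_right]; exact hsρ.le⟩
  obtain ⟨hfin', hcard'⟩ := hS.finite_and_ncard_annulus_le hβ0 hβ1 hρ zero_le_two 0
  rw [show (2 : ℝ) + 1 = 3 by norm_num] at hcard'
  refine ⟨(hfin.union hfin').subset hsplit, ?_⟩
  calc ({s ∈ S | ‖s‖ < 2 * ρ}.ncard : ℝ)
      ≤ {s ∈ S | ‖s‖ < ρ}.ncard + {s ∈ S | ρ ≤ ‖s‖ ∧ dist s 0 ≤ 2 * ρ}.ncard := by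
        exact_mod_cast (Set.ncard_le_ncard hsplit (hfin.union hfin')).trans
          (Set.ncard_union_le _ _)
    _ ≤ _ := by gcongr

variable [Nontrivial E]

theorem exists_ncard_norm_lt_two_pow_le (hS : IsPowSeparated β S) (hβ0 : 0 ≤ β) (hβ1 : β < 1) :
    ∃ A ≥ (0 : ℝ), ∀ n : ℕ, {s ∈ S | ‖s‖ < 2 ^ n}.Finite ∧
      ({s ∈ S | ‖s‖ < 2 ^ n}.ncard : ℝ) ≤ A * (((2 : ℝ) ^ n) ^ (1 - β)) ^ finrank ℝ E := by
  set d := finrank ℝ E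
  set q : ℝ := ((2 : ℝ) ^ (1 - β)) ^ d
  have hq : 1 < q := one_lt_pow₀ (Real.one_lt_rpow one_lt_two (by linarith)) finrank_pos.ne'
  have hq1 : 0 < q - 1 := by linarith
  set A : ℝ := 1 + 3 ^ d / (q - 1)
  have hA : A + 3 ^ d ≤ A * q := by
    have : 3 ^ d / (q - 1) * (q - 1) = 3 ^ d := div_mul_cancel₀ _ hq1.ne'
    nlinarith
  have hA1 : 1 ≤ A := le_add_of_nonneg_right (by positivity)
  refine ⟨A, by linarith, fun n => ?_⟩
  induction n with
  | zero =>
    have hsub := hS.subsingleton_norm_lt_one hβ1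
    simp only [pow_zero, Real.one_rpow, one_pow, mul_one] at hsub ⊢
    refine ⟨hsub.finite, ?_⟩
    have := (Set.ncard_le_one_iff hsub.finite).2 fun ha hb => hsub ha hb
    exact le_trans (by exact_mod_cast this) hA1
  | succ n ih =>
    set g := (((2 : ℝ) ^ n) ^ (1 - β)) ^ d
    have hgrow : ((2 * (2 : ℝ) ^ n) ^ (1 - β)) ^ d = q * g := by
      rw [Real.mul_rpow zero_le_two (by positivity), mul_pow]
    obtain ⟨hfin, hcard⟩ := ih
    rw [pow_succ', hgrow]
    obtain ⟨hfin', hcard'⟩ :=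
      hS.finite_and_ncard_norm_lt_two_mul_le hβ0 hβ1.le (one_le_pow₀ one_le_two) hfin
    refine ⟨hfin', hcard'.trans ?_⟩
    nlinarith [show 0 ≤ g by positivity]

theorem exists_ncard_inter_ball_le (hS : IsPowSeparated β S) (hβ0 : 0 ≤ β) (hβ1 : β < 1) :
    ∃ α > (0 : ℝ), ∀ r ≥ 1, ∀ x : E, (S ∩ ball x r).Finite ∧
      ((S ∩ ball x r).ncard : ℝ) ≤ α * (r ^ (1 - β)) ^ finrank ℝ E := by
  obtain ⟨A, hA0, hA⟩ := hS.exists_ncard_norm_lt_two_pow_le hβ0 hβ1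
  set d := finrank ℝ E
  set q : ℝ := ((2 : ℝ) ^ (1 - β)) ^ d
  refine ⟨A * q + 2 ^ d, by positivity, fun r hr x => ?_⟩
  obtain ⟨n, hnr, hrn⟩ := exists_nat_pow_near hr one_lt_two
  have hsplit : S ∩ ball x r ⊆
      {s ∈ S | ‖s‖ < 2 ^ (n + 1)} ∪ {s ∈ S | r ≤ ‖s‖ ∧ dist s x ≤ 1 * r} := by
    rintro s ⟨hs, hsx⟩
    by_cases h : ‖s‖ < r
    · exact Or.inl ⟨hs, h.trans hrn⟩
    · exact Or.inr ⟨hs, not_lt.1 h, by rw [one_mul]; exact (mem_ball.1 hsx).le⟩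
  obtain ⟨hfin, hcard⟩ := hA (n + 1)
  obtain ⟨hfin', hcard'⟩ := hS.finite_and_ncard_annulus_le hβ0 hβ1.le hr zero_le_one x
  have hscale : (((2 : ℝ) ^ (n + 1)) ^ (1 - β)) ^ d ≤ q * (r ^ (1 - β)) ^ d := by
    calc (((2 : ℝ) ^ (n + 1)) ^ (1 - β)) ^ d ≤ ((2 * r) ^ (1 - β)) ^ d := by
          gcongr
          rw [pow_succ']
          linarith
      _ = q * (r ^ (1 - β)) ^ d := by rw [Real.mul_rpow zero_le_two (by linarith), mul_pow]
  refine ⟨(hfin.union hfin').subset hsplit, ?_⟩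
  calc ((S ∩ ball x r).ncard : ℝ)
      ≤ {s ∈ S | ‖s‖ < 2 ^ (n + 1)}.ncard + {s ∈ S | r ≤ ‖s‖ ∧ dist s x ≤ 1 * r}.ncard := by
        exact_mod_cast (Set.ncard_le_ncard hsplit (hfin.union hfin')).trans
          (Set.ncard_union_le _ _)
    _ ≤ A * (q * (r ^ (1 - β)) ^ d) + 2 ^ d * (r ^ (1 - β)) ^ d := by
        rw [one_add_one_eq_two] at hcard'
        linarith [mul_le_mul_of_nonneg_left hscale hA0]
    _ = (A * q + 2 ^ d) * (r ^ (1 - β)) ^ d := by ring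

end IsPowSeparated

theorem embed2_injective : Function.Injective embed2 := by
  intro s s' h
  have h0 := congrArg (· 0) h
  have h1 := congrArg (· 1) h
  simp only [embed2, WithLp.equiv_symm_apply, PiLp.toLp_apply, Matrix.cons_val_zero,
    Matrix.cons_val_one, Int.cast_inj] at h0 h1
  exact Prod.ext h0 h1

theorem SepCov.isPowSeparated_image {β : ℝ} {S : Set (ℤ × ℤ)} (hS : SepCov β S) :
    IsPowSeparated β (embed2 '' S) := by
  rintro _ ⟨s, hs, rfl⟩ _ ⟨s', hs', rfl⟩ hne
  rw [dist_eq_norm]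
  exact hS.2.2.1 s hs s' hs' (embed2_injective.ne_iff.1 hne)

/-- For a `β`-separated-covering set `S`, there are `r₀, α₀ > 0` such that for every
`r > r₀` and every `x ∈ ℝ²` the set `S ∩ B(x,r)` is finite with at most
`α₀ · r^(2-2β)` elements. -/
theorem card_inter_ball_le (β : ℝ) (hβ0 : 0 < β) (hβ1 : β < 1)
    (S : Set (ℤ × ℤ)) (hS : SepCov β S) :
    ∃ r₀ > (0 : ℝ), ∃ α₀ > (0 : ℝ), ∀ r > r₀, ∀ x : EuclideanSpace ℝ (Fin 2),
      {s ∈ S | embed2 s ∈ Metric.ball x r}.Finite ∧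
      ({s ∈ S | embed2 s ∈ Metric.ball x r}.ncard : ℝ) ≤ α₀ * r ^ (2 - 2 * β) := by
  obtain ⟨α, hα, hball⟩ := hS.isPowSeparated_image.exists_ncard_inter_ball_le hβ0.le hβ1
  refine ⟨1, one_pos, α, hα, fun r hr x => ?_⟩
  have himage : embed2 '' {s ∈ S | embed2 s ∈ ball x r} = embed2 '' S ∩ ball x r :=
    Set.image_inter_preimage embed2 S (ball x r)
  have hexp : (r ^ (1 - β)) ^ finrank ℝ (EuclideanSpace ℝ (Fin 2)) = r ^ (2 - 2 * β) := by
    rw [finrank_euclideanSpace_fin, ← Real.rpow_natCast, ← Real.rpow_mul (by linarith)]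
    ring_nf
  obtain ⟨hfin, hcard⟩ := hball r hr.le x
  rw [← himage] at hfin hcard
  rw [Set.ncard_image_of_injective _ embed2_injective, hexp] at hcard
  exact ⟨hfin.of_finite_image embed2_injective.injOn, hcard⟩
end

section
/- Let β ∈ (0,1) and let S ⊆ ℤ² be β-separated-covering. Then there exists r₀ > 0 such that for every x ∈ ℝ² and every r with r > r₀ and 8|x|^β ≤ r ≤ |x|/2, one has (1/64)·|x|^{−2β}·r² ≤ card(S ∩ B(x,r)) ≤ 6·|x|^{−2β}·r². -/
/-!
Write `u = |x|^β`, so that `8u ≤ r ≤ |x|/2`. Points of `S ∩ B(x,r)` have norm at least `|x|/2`,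
hence by separation the balls of radius `u/2` about them are pairwise disjoint; they lie in
`B(x, 9r/8)`, and comparing areas gives the upper bound. Conversely, the covering property puts
every point of `B(x, r/2)` within `4u` of a point of `S`, which then lies in `B(x,r)`; comparing
areas again gives the lower bound.
-/

open Metric MeasureTheory Measure Module

section Volume

variable {E : Type*} [NormedAddCommGroup E] [NormedSpace ℝ E] [FiniteDimensional ℝ E]
  [MeasurableSpace E] [BorelSpace E]

theorem card_mul_pow_le_of_pairwiseDisjoint_ball {ι : Type*} {t : Finset ι} {c : ι → E} {x : E}
    {ρ R : ℝ} (hρ : 0 < ρ) (hR : 0 < R)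
    (hdisj : (t : Set ι).PairwiseDisjoint fun i => ball (c i) ρ)
    (hsub : ∀ i ∈ t, ball (c i) ρ ⊆ ball x R) :
    t.card * ρ ^ finrank ℝ E ≤ R ^ finrank ℝ E := by
  let μ : Measure E := addHaar
  have key : ENNReal.ofReal (t.card * ρ ^ finrank ℝ E) * μ (ball 0 1)
      ≤ ENNReal.ofReal (R ^ finrank ℝ E) * μ (ball 0 1) := calc
    _ = ∑ i ∈ t, μ (ball (c i) ρ) := by
      simp only [addHaar_ball_of_pos μ _ hρ, Finset.sum_const, nsmul_eq_mul,
        ENNReal.ofReal_mul (Nat.cast_nonneg _), ENNReal.ofReal_natCast, mul_assoc]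
    _ = μ (⋃ i ∈ t, ball (c i) ρ) :=
      (measure_biUnion_finset hdisj fun _ _ => measurableSet_ball).symm
    _ ≤ μ (ball x R) := measure_mono (Set.iUnion₂_subset hsub)
    _ = _ := addHaar_ball_of_pos μ x hR
  rwa [ENNReal.mul_le_mul_iff_left (measure_ball_pos μ _ one_pos).ne' measure_ball_lt_top.ne,
    ENNReal.ofReal_le_ofReal_iff (by positivity)] at key

theorem pow_le_card_mul_pow_of_ball_subset_biUnion {ι : Type*} {t : Finset ι} {c : ι → E}
    {x : E} {ρ R : ℝ} (hρ : 0 ≤ ρ) (hR : 0 < R)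
    (hcover : ball x R ⊆ ⋃ i ∈ t, closedBall (c i) ρ) :
    R ^ finrank ℝ E ≤ t.card * ρ ^ finrank ℝ E := by
  let μ : Measure E := addHaar
  have key : ENNReal.ofReal (R ^ finrank ℝ E) * μ (ball 0 1)
      ≤ ENNReal.ofReal (t.card * ρ ^ finrank ℝ E) * μ (ball 0 1) := calc
    _ = μ (ball x R) := (addHaar_ball_of_pos μ x hR).symm
    _ ≤ μ (⋃ i ∈ t, closedBall (c i) ρ) := measure_mono hcover
    _ ≤ ∑ i ∈ t, μ (closedBall (c i) ρ) := measure_biUnion_finset_le t _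
    _ = _ := by
      simp only [addHaar_closedBall μ _ hρ, Finset.sum_const, nsmul_eq_mul,
        ENNReal.ofReal_mul (Nat.cast_nonneg _), ENNReal.ofReal_natCast, mul_assoc]
  rwa [ENNReal.mul_le_mul_iff_left (measure_ball_pos μ _ one_pos).ne' measure_ball_lt_top.ne,
    ENNReal.ofReal_le_ofReal_iff (by positivity)] at key

end Volume

theorem rpow_mul_le_mul_rpow {c b β : ℝ} (hc : 1 ≤ c) (hb : 0 ≤ b) (hβ1 : β ≤ 1) :
    (c * b) ^ β ≤ c * b ^ β := by
  rw [Real.mul_rpow (by linarith) hb]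
  exact mul_le_mul_of_nonneg_right (Real.rpow_le_self_of_one_le hc hβ1)
    (Real.rpow_nonneg hb β)

theorem half_rpow_le_rpow_of_half_le {a b β : ℝ} (hb : 0 ≤ b) (hba : b / 2 ≤ a) (hβ0 : 0 ≤ β)
    (hβ1 : β ≤ 1) : b ^ β / 2 ≤ a ^ β := by
  have := rpow_mul_le_mul_rpow one_le_two (by linarith : 0 ≤ b / 2) hβ1
  rw [mul_div_cancel₀ b two_ne_zero] at this
  linarith [Real.rpow_le_rpow (by linarith) hba hβ0]

theorem norm_sub_le_four_mul_rpow {E : Type*} [SeminormedAddCommGroup E] {β : ℝ} (hβ0 : 0 ≤ β)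
    (hβ1 : β ≤ 1) {x y p : E} (hx2 : 2 ≤ ‖x‖ ^ β) (hx16 : 16 * ‖x‖ ^ β ≤ ‖x‖)
    (hy : ‖y‖ ≤ 5 / 4 * ‖x‖) (hp : ‖y - p‖ ≤ ‖p‖ ^ β + (‖y‖ + 1) ^ β + 1) :
    ‖y - p‖ ≤ 4 * ‖x‖ ^ β := by
  have hx0 : 0 < ‖x‖ := by linarith
  have hp_le : ‖p‖ ≤ ‖y‖ + ‖y - p‖ := norm_le_norm_add_norm_sub y p
  have hy1 : (‖y‖ + 1) ^ β ≤ 3 / 2 * ‖x‖ ^ β := calc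
    (‖y‖ + 1) ^ β ≤ (3 / 2 * ‖x‖) ^ β := Real.rpow_le_rpow (by positivity) (by linarith) hβ0
    _ ≤ 3 / 2 * ‖x‖ ^ β := rpow_mul_le_mul_rpow (by norm_num) hx0.le hβ1
  have hpx : ‖p‖ ≤ 2 * ‖x‖ := by
    by_contra! h
    have : ‖p‖ ^ β ≤ ‖p‖ / 16 := calc
      ‖p‖ ^ β = (‖p‖ / ‖x‖ * ‖x‖) ^ β := by rw [div_mul_cancel₀ _ hx0.ne']
      _ ≤ ‖p‖ / ‖x‖ * ‖x‖ ^ β :=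
        rpow_mul_le_mul_rpow ((one_le_div hx0).2 (by linarith)) hx0.le hβ1
      _ ≤ ‖p‖ / ‖x‖ * (‖x‖ / 16) := by gcongr; linarith
      _ = ‖p‖ / 16 := by field_simp
    linarith
  have hpβ : ‖p‖ ^ β ≤ 2 * ‖x‖ ^ β := calc
    ‖p‖ ^ β ≤ (2 * ‖x‖) ^ β := Real.rpow_le_rpow (norm_nonneg p) hpx hβ0
    _ ≤ 2 * ‖x‖ ^ β := rpow_mul_le_mul_rpow one_le_two hx0.le hβ1
  linarith

theorem antilipschitzWith_embed2 : AntilipschitzWith 1 embed2 :=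
  AntilipschitzWith.of_le_mul_dist fun s s' => by
    rw [NNReal.coe_one, one_mul, Prod.dist_eq, max_le_iff, ← Int.dist_cast_real,
      ← Int.dist_cast_real]
    exact ⟨by simpa [embed2] using PiLp.dist_apply_le (embed2 s) (embed2 s') 0,
      by simpa [embed2] using PiLp.dist_apply_le (embed2 s) (embed2 s') 1⟩

theorem finite_embed2_preimage_ball (x : EuclideanSpace ℝ (Fin 2)) (r : ℝ) :
    (embed2 ⁻¹' ball x r).Finite :=
  (isCompact_of_isClosed_isBounded (isClosed_discrete _)
    (antilipschitzWith_embed2.isBounded_preimage isBounded_ball)).finite_of_discrete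

theorem ncard_inter_ball_mul_sq_le {β : ℝ} (hβ0 : 0 ≤ β) (hβ1 : β ≤ 1) {S : Set (ℤ × ℤ)}
    (hSep : ∀ s ∈ S, ∀ s' ∈ S, s ≠ s' →
      ‖embed2 s - embed2 s'‖ ≥ ‖embed2 s‖ ^ β + ‖embed2 s'‖ ^ β)
    {x : EuclideanSpace ℝ (Fin 2)} {r : ℝ} (hr : 0 < r) (hr8 : 8 * ‖x‖ ^ β ≤ r)
    (hrx : r ≤ ‖x‖ / 2) :
    ({s ∈ S | embed2 s ∈ ball x r}.ncard : ℝ) * (‖x‖ ^ β) ^ 2 ≤ 6 * r ^ 2 := by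
  set T := {s ∈ S | embed2 s ∈ ball x r}
  have hT : T.Finite := (finite_embed2_preimage_ball x r).subset fun _ hs => hs.2
  have hu : 0 < ‖x‖ ^ β := Real.rpow_pos_of_pos (by linarith) β
  have hρ : ∀ s ∈ T, ‖x‖ ^ β / 2 ≤ ‖embed2 s‖ ^ β := fun s hs => by
    have hsx : dist (embed2 s) x < r := hs.2
    have := norm_le_norm_add_norm_sub' x (embed2 s)
    rw [← dist_eq_norm, dist_comm] at this
    exact half_rpow_le_rpow_of_half_le (norm_nonneg x) (by linarith) hβ0 hβ1
  have hdisj : (hT.toFinset : Set (ℤ × ℤ)).PairwiseDisjoint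
      fun s => ball (embed2 s) (‖x‖ ^ β / 2) := by
    rw [hT.coe_toFinset]
    intro s hs s' hs' hne
    refine ball_disjoint_ball ?_
    rw [dist_eq_norm]
    linarith [hSep s hs.1 s' hs'.1 hne, hρ s hs, hρ s' hs']
  have hsub : ∀ s ∈ hT.toFinset, ball (embed2 s) (‖x‖ ^ β / 2) ⊆ ball x (9 / 8 * r) :=
    fun s hs => ball_subset_ball' (by linarith [mem_ball.1 (hT.mem_toFinset.1 hs).2])
  have hpack := card_mul_pow_le_of_pairwiseDisjoint_ball (by positivity) (by positivity)
    hdisj hsub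
  rw [finrank_euclideanSpace_fin] at hpack
  rw [Set.ncard_eq_toFinset_card T hT]
  nlinarith

theorem sq_le_ncard_inter_ball_mul_sq {β : ℝ} (hβ0 : 0 ≤ β) (hβ1 : β ≤ 1) {S : Set (ℤ × ℤ)}
    (hCov : ∀ y : EuclideanSpace ℝ (Fin 2), ∃ s ∈ S,
      ‖y - embed2 s‖ ≤ ‖embed2 s‖ ^ β + (‖y‖ + 1) ^ β + 1)
    {x : EuclideanSpace ℝ (Fin 2)} {r : ℝ} (hx2 : 2 ≤ ‖x‖ ^ β) (hr8 : 8 * ‖x‖ ^ β ≤ r)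
    (hrx : r ≤ ‖x‖ / 2) :
    r ^ 2 ≤ 64 * ({s ∈ S | embed2 s ∈ ball x r}.ncard : ℝ) * (‖x‖ ^ β) ^ 2 := by
  set T := {s ∈ S | embed2 s ∈ ball x r}
  have hT : T.Finite := (finite_embed2_preimage_ball x r).subset fun _ hs => hs.2
  have hcover : ball x (r / 2) ⊆ ⋃ s ∈ hT.toFinset, closedBall (embed2 s) (4 * ‖x‖ ^ β) := by
    intro y hy
    obtain ⟨s, hsS, hs⟩ := hCov y
    have hyx : ‖y - x‖ < r / 2 := by rwa [mem_ball, dist_eq_norm] at hy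
    have hys := norm_sub_le_four_mul_rpow hβ0 hβ1 hx2 (by linarith)
      (by linarith [norm_le_norm_add_norm_sub' y x]) hs
    have hsT : s ∈ T := by
      refine ⟨hsS, mem_ball.2 ?_⟩
      calc dist (embed2 s) x ≤ ‖y - embed2 s‖ + ‖y - x‖ := by
            rw [← dist_eq_norm, ← dist_eq_norm, dist_comm y]; exact dist_triangle _ _ _
        _ < r := by linarith
    exact Set.mem_iUnion₂.2 ⟨s, hT.mem_toFinset.2 hsT, by rwa [mem_closedBall, dist_eq_norm]⟩
  have hcov := pow_le_card_mul_pow_of_ball_subset_biUnion (by positivity) (by linarith) hcover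
  rw [finrank_euclideanSpace_fin] at hcov
  rw [Set.ncard_eq_toFinset_card T hT]
  nlinarith

/-- For a `β`-separated-covering set `S`, there is `r₀ > 0` such that for all `x ∈ ℝ²`
and all `r` with `r > r₀` and `8|x|^β ≤ r ≤ |x|/2` one has
`(1/64)·|x|^(-2β)·r² ≤ card(S ∩ B(x,r)) ≤ 6·|x|^(-2β)·r²`. -/
theorem card_inter_ball_two_sided (β : ℝ) (hβ0 : 0 < β) (hβ1 : β < 1)
    (S : Set (ℤ × ℤ)) (hS : SepCov β S) :
    ∃ r₀ > (0 : ℝ), ∀ x : EuclideanSpace ℝ (Fin 2), ∀ r : ℝ, r > r₀ →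
      8 * ‖x‖ ^ β ≤ r → r ≤ ‖x‖ / 2 →
      (1 / 64) * ‖x‖ ^ (-(2 * β)) * r ^ 2 ≤
          ({s ∈ S | embed2 s ∈ Metric.ball x r}.ncard : ℝ) ∧
      ({s ∈ S | embed2 s ∈ Metric.ball x r}.ncard : ℝ) ≤
          6 * ‖x‖ ^ (-(2 * β)) * r ^ 2 := by
  obtain ⟨-, -, hSep, hCov⟩ := hS
  -- `r₀ = 2^(1/β)` forces `|x|^β ≥ 2`, which absorbs the `+ 1` in the covering property.
  refine ⟨2 ^ β⁻¹, by positivity, fun x r hr hr8 hrx => ?_⟩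
  have hr0 : 0 < r := lt_trans (by positivity) hr
  have hx2 : 2 ≤ ‖x‖ ^ β :=
    (Real.rpow_inv_le_iff_of_pos zero_le_two (norm_nonneg x) hβ0).1 (by linarith)
  have hu : 0 < (‖x‖ ^ β) ^ 2 := by positivity
  have hupper := ncard_inter_ball_mul_sq_le hβ0.le hβ1.le hSep hr0 hr8 hrx
  have hlower := sq_le_ncard_inter_ball_mul_sq hβ0.le hβ1.le hCov hx2 hr8 hrx
  have hneg : ‖x‖ ^ (-(2 * β)) = ((‖x‖ ^ β) ^ 2)⁻¹ := by
    rw [Real.rpow_neg (norm_nonneg x), mul_comm, Real.rpow_mul (norm_nonneg x), Real.rpow_two]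
  rw [hneg]
  constructor
  · rw [show 1 / 64 * ((‖x‖ ^ β) ^ 2)⁻¹ * r ^ 2 = r ^ 2 / (64 * (‖x‖ ^ β) ^ 2) by ring,
      div_le_iff₀ (by positivity)]
    linarith
  · rw [show 6 * ((‖x‖ ^ β) ^ 2)⁻¹ * r ^ 2 = 6 * r ^ 2 / (‖x‖ ^ β) ^ 2 by ring,
      le_div_iff₀ hu]
    exact hupper
end

section
/- Let β ∈ (0,1) and let S ⊆ ℤ² be β-separated-covering. Then there exists r₀ > 0 such that for every x ∈ ℝ² and every r with r > r₀ and r < 8|x|^β, one has card(S ∩ B(x,r)) ≤ 324. -/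
/-!
Since `r₀ < r < 8‖x‖^β`, the point `x` is far from the origin, so far that `16‖x‖^β < ‖x‖`
(this is where `β < 1` enters). Hence `r < ‖x‖/2` and every point of `S` in `B(x,r)` has norm at
least `‖x‖/2`, so by separation these points are pairwise `2ρ`-apart with `ρ = (‖x‖/2)^β`. The
disjoint balls of radius `ρ` around them fit in `B(x, r + ρ)` and `r < 16ρ`, so comparing areas
leaves fewer than `17² = 289` of them.
-/

open Metric MeasureTheory Module

section Packing

variable {E : Type*} [NormedAddCommGroup E] [NormedSpace ℝ E] [FiniteDimensional ℝ E]
  [Nontrivial E] {ι : Type*}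

theorem Finset.card_mul_pow_le_of_pairwise_dist (T : Finset ι) (f : ι → E) (x : E) {r ρ : ℝ}
    (hr : 0 ≤ r) (hρ : 0 < ρ) (hT : ∀ s ∈ T, f s ∈ ball x r)
    (hsep : (T : Set ι).Pairwise fun s t => 2 * ρ ≤ dist (f s) (f t)) :
    (T.card : ℝ) * ρ ^ finrank ℝ E ≤ (r + ρ) ^ finrank ℝ E := by
  borelize E
  let μ : Measure E := Measure.addHaar
  have hdisj : (T : Set ι).PairwiseDisjoint fun s => ball (f s) ρ := fun s hs t ht hst =>
    ball_disjoint_ball (by linarith [hsep hs ht hst])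
  have hsub : (⋃ s ∈ T, ball (f s) ρ) ⊆ ball x (r + ρ) :=
    Set.iUnion₂_subset fun s hs => ball_subset_ball' (by linarith [mem_ball.mp (hT s hs)])
  have hvol : ∑ s ∈ T, μ (ball (f s) ρ) ≤ μ (ball x (r + ρ)) := by
    rw [← measure_biUnion_finset hdisj fun s _ => measurableSet_ball]
    exact measure_mono hsub
  simp only [μ, Measure.addHaar_ball _ _ hρ.le, Measure.addHaar_ball _ _ (by linarith : 0 ≤ r + ρ),
    Finset.sum_const, nsmul_eq_mul, ← mul_assoc] at hvol
  rw [ENNReal.mul_le_mul_iff_left (measure_ball_pos _ _ one_pos).ne' measure_ball_lt_top.ne,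
    ← ENNReal.ofReal_natCast, ← ENNReal.ofReal_mul (by positivity),
    ENNReal.ofReal_le_ofReal_iff (by positivity)] at hvol
  exact hvol

theorem Set.ncard_mul_pow_le_of_pairwise_dist (A : Set ι) (f : ι → E) (x : E) {r ρ : ℝ}
    (hr : 0 ≤ r) (hρ : 0 < ρ) (hA : ∀ s ∈ A, f s ∈ ball x r)
    (hsep : A.Pairwise fun s t => 2 * ρ ≤ dist (f s) (f t)) :
    (A.ncard : ℝ) * ρ ^ finrank ℝ E ≤ (r + ρ) ^ finrank ℝ E := by
  by_cases hfin : A.Finite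
  · obtain ⟨T, rfl⟩ := hfin.exists_finset_coe
    rw [Set.ncard_coe_finset]
    exact T.card_mul_pow_le_of_pairwise_dist f x hr hρ hA hsep
  · rw [Set.Infinite.ncard hfin, Nat.cast_zero, zero_mul]
    positivity

end Packing

theorem mul_rpow_lt_self {β c t : ℝ} (hβ : β < 1) (hc : 0 < c) (ht : c ^ (1 - β)⁻¹ < t) :
    c * t ^ β < t := by
  have hβ' : 0 < 1 - β := by linarith
  have ht0 : 0 < t := (Real.rpow_pos_of_pos hc _).trans ht
  have hct : c < t ^ (1 - β) := by
    simpa [Real.rpow_inv_rpow hc.le hβ'.ne'] using Real.rpow_lt_rpow (by positivity) ht hβ'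
  calc c * t ^ β < t ^ (1 - β) * t ^ β := by gcongr
    _ = t := by rw [← Real.rpow_add ht0]; norm_num

theorem SepCov.two_mul_rpow_le_dist {β : ℝ} {S : Set (ℤ × ℤ)} (hS : SepCov β S) (hβ : 0 ≤ β)
    {ρ : ℝ} (hρ : 0 ≤ ρ) {s t : ℤ × ℤ} (hs : s ∈ S) (ht : t ∈ S) (hst : s ≠ t)
    (hρs : ρ ≤ ‖embed2 s‖) (hρt : ρ ≤ ‖embed2 t‖) :
    2 * ρ ^ β ≤ dist (embed2 s) (embed2 t) := by
  have := hS.2.2.1 s hs t ht hst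
  rw [dist_eq_norm]
  linarith [Real.rpow_le_rpow hρ hρs hβ, Real.rpow_le_rpow hρ hρt hβ]

/-- For a `β`-separated-covering set `S`, there is `r₀ > 0` such that for all `x ∈ ℝ²`
and all `r` with `r > r₀` and `r < 8|x|^β` one has `card(S ∩ B(x,r)) ≤ 324`. -/
theorem card_inter_ball_small_radius (β : ℝ) (hβ0 : 0 < β) (hβ1 : β < 1)
    (S : Set (ℤ × ℤ)) (hS : SepCov β S) :
    ∃ r₀ > (0 : ℝ), ∀ x : EuclideanSpace ℝ (Fin 2), ∀ r : ℝ, r > r₀ →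
      r < 8 * ‖x‖ ^ β →
      {s ∈ S | embed2 s ∈ Metric.ball x r}.ncard ≤ 324 := by
  set M : ℝ := (16 : ℝ) ^ (1 - β)⁻¹
  refine ⟨8 * M ^ β, by positivity, fun x r hr₀ hrx => ?_⟩
  have hr : 0 < r := lt_trans (by positivity) hr₀
  have hxM : M < ‖x‖ := (Real.rpow_lt_rpow_iff (by positivity) (norm_nonneg x) hβ0).mp (by linarith)
  have hx : 16 * ‖x‖ ^ β < ‖x‖ := mul_rpow_lt_self hβ1 (by norm_num) hxM
  set ρ := (‖x‖ / 2) ^ β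
  have hρ : 0 < ρ := Real.rpow_pos_of_pos (by linarith [(by positivity : 0 < M)]) β
  have hrρ : r < 16 * ρ := by
    have h2 : (2 : ℝ) ^ β ≤ 2 := by
      simpa using Real.rpow_le_rpow_of_exponent_le (by norm_num : (1 : ℝ) ≤ 2) hβ1.le
    have hxρ : ‖x‖ ^ β = 2 ^ β * ρ := by
      rw [← Real.mul_rpow (by norm_num) (by positivity)]; ring_nf
    nlinarith
  have hfar : ∀ s ∈ {s ∈ S | embed2 s ∈ ball x r}, ‖x‖ / 2 ≤ ‖embed2 s‖ := by
    rintro s ⟨-, hs⟩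
    linarith [norm_le_norm_add_norm_sub' x (embed2 s), mem_ball_iff_norm'.mp hs]
  have hpack := Set.ncard_mul_pow_le_of_pairwise_dist _ embed2 x (by positivity) hρ
    (fun s hs => hs.2) fun s hs t ht hst =>
      hS.two_mul_rpow_le_dist hβ0.le (by positivity) hs.1 ht.1 hst (hfar s hs) (hfar t ht)
  rw [finrank_euclideanSpace_fin] at hpack
  have hlt : ({s ∈ S | embed2 s ∈ ball x r}.ncard : ℝ) * ρ ^ 2 < 289 * ρ ^ 2 :=
    hpack.trans_lt (by nlinarith)
  have hcard : {s ∈ S | embed2 s ∈ ball x r}.ncard < 289 := by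
    exact_mod_cast lt_of_mul_lt_mul_right hlt (by positivity)
  omega
end

section
/- Let β ∈ (0,1) and let S ⊆ ℤ² be β-separated-covering. Then there exists r₀ > 0 such that for every r ≥ r₀, the number of points of S in the closed annulus {y ∈ ℝ² : r/2 ≤ |y| ≤ r} is at most 12·r^{2−2β}. -/
open MeasureTheory Metric Module

theorem ncard_mul_pow_finrank_le_of_pairwiseDisjoint_ball {E ι : Type*} [NormedAddCommGroup E]
    [NormedSpace ℝ E] [MeasurableSpace E] [BorelSpace E] [FiniteDimensional ℝ E]
    (μ : Measure E) [μ.IsAddHaarMeasure] {s : Set ι} {c : ι → E} {x : E} {ρ R : ℝ}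
    (hρ : 0 < ρ) (hR : 0 < R) (hdisj : s.PairwiseDisjoint fun i => ball (c i) ρ)
    (hsub : ∀ i ∈ s, ball (c i) ρ ⊆ ball x R) :
    (s.ncard : ℝ) * ρ ^ finrank ℝ E ≤ R ^ finrank ℝ E := by
  rcases s.finite_or_infinite with hs | hs
  swap
  · simpa [hs.ncard] using (pow_pos hR _).le
  set t := hs.toFinset
  have hvol : (t.card : ENNReal) * μ (ball 0 ρ) ≤ μ (ball x R) :=
    calc (t.card : ENNReal) * μ (ball 0 ρ) = ∑ i ∈ t, μ (ball (c i) ρ) := by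
          simp [Measure.addHaar_ball_of_pos μ _ hρ]
      _ = μ (⋃ i ∈ t, ball (c i) ρ) :=
          (measure_biUnion_finset (by simpa [t] using hdisj) fun _ _ => measurableSet_ball).symm
      _ ≤ μ (ball x R) :=
          measure_mono <| Set.iUnion₂_subset fun i hi => hsub i (by simpa [t] using hi)
  rw [Measure.addHaar_ball_of_pos μ _ hρ, Measure.addHaar_ball_of_pos μ _ hR, ← mul_assoc,
    ENNReal.mul_le_mul_iff_left (measure_ball_pos μ 0 one_pos).ne' measure_ball_lt_top.ne,
    ← ENNReal.ofReal_natCast, ← ENNReal.ofReal_mul (by positivity),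
    ENNReal.ofReal_le_ofReal_iff (by positivity)] at hvol
  rwa [Set.ncard_eq_toFinset_card s hs]

theorem SepCov.pairwiseDisjoint_ball {β : ℝ} {S : Set (ℤ × ℤ)} (hS : SepCov β S) (hβ : 0 ≤ β)
    {a : ℝ} (ha : 0 ≤ a) :
    {s ∈ S | a ≤ ‖embed2 s‖}.PairwiseDisjoint fun s => ball (embed2 s) (a ^ β) := by
  rintro s ⟨hs, has⟩ s' ⟨hs', has'⟩ hne
  apply ball_disjoint_ball
  calc a ^ β + a ^ β ≤ ‖embed2 s‖ ^ β + ‖embed2 s'‖ ^ β := by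
        gcongr
    _ ≤ dist (embed2 s) (embed2 s') := by
        rw [dist_eq_norm]
        exact hS.2.2.1 s hs s' hs' hne

theorem sq_rpow_half_mul_rpow_two_sub {r : ℝ} (hr : 0 < r) (β : ℝ) :
    ((r / 2) ^ β) ^ 2 * r ^ (2 - 2 * β) = r ^ 2 / 4 ^ β := by
  have hsq : ((r / 2) ^ β) ^ 2 = r ^ (2 * β) / 4 ^ β := by
    rw [← Real.rpow_natCast, ← Real.rpow_mul (by positivity), Real.div_rpow hr.le (by norm_num),
      mul_comm, Real.rpow_mul (by norm_num : (0 : ℝ) ≤ 2)]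
    norm_num
  rw [hsq, div_mul_eq_mul_div, ← Real.rpow_add hr]
  norm_num

/-- For a `β`-separated-covering set `S`, there is `r₀ > 0` such that for every `r ≥ r₀`
the closed annulus `{y : r/2 ≤ |y| ≤ r}` contains at most `12·r^(2-2β)` points of `S`. -/
theorem card_inter_annulus_le (β : ℝ) (hβ0 : 0 < β) (hβ1 : β < 1)
    (S : Set (ℤ × ℤ)) (hS : SepCov β S) :
    ∃ r₀ > (0 : ℝ), ∀ r : ℝ, r₀ ≤ r →
      ({s ∈ S | r / 2 ≤ ‖embed2 s‖ ∧ ‖embed2 s‖ ≤ r}.ncard : ℝ) ≤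
        12 * r ^ (2 - 2 * β) := by
  refine ⟨2, two_pos, fun r hr => ?_⟩
  set N := ({s ∈ S | r / 2 ≤ ‖embed2 s‖ ∧ ‖embed2 s‖ ≤ r}.ncard : ℝ)
  set ρ := (r / 2) ^ β
  have hr0 : 0 < r := by linarith
  have hρ0 : 0 < ρ := by positivity
  have hρr : ρ ≤ r / 2 := by
    simpa using Real.rpow_le_rpow_of_exponent_le (by linarith : 1 ≤ r / 2) hβ1.le
  have hpack : N * ρ ^ 2 ≤ (r + ρ) ^ 2 := by
    have hsub : ∀ s ∈ {s ∈ S | r / 2 ≤ ‖embed2 s‖ ∧ ‖embed2 s‖ ≤ r},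
        ball (embed2 s) ρ ⊆ ball 0 (r + ρ) := fun s hs =>
      ball_subset_ball' (by rw [dist_zero_right]; linarith [hs.2.2])
    have := ncard_mul_pow_finrank_le_of_pairwiseDisjoint_ball volume hρ0 (by positivity)
      ((hS.pairwiseDisjoint_ball hβ0.le (by positivity)).subset fun s hs => ⟨hs.1, hs.2.1⟩) hsub
    simpa only [finrank_euclideanSpace_fin] using this
  have hρ_lower : r ^ 2 ≤ 4 * (ρ ^ 2 * r ^ (2 - 2 * β)) := by
    have h4β : (4 : ℝ) ^ β ≤ 4 := by
      simpa using Real.rpow_le_rpow_of_exponent_le (by norm_num : (1 : ℝ) ≤ 4) hβ1.le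
    rw [sq_rpow_half_mul_rpow_two_sub hr0 β, mul_div_assoc', le_div_iff₀ (by positivity), mul_comm]
    gcongr
  have hN : N * ρ ^ 2 ≤ 9 * r ^ (2 - 2 * β) * ρ ^ 2 :=
    calc N * ρ ^ 2 ≤ (r + ρ) ^ 2 := hpack
      _ ≤ 9 / 4 * r ^ 2 := by nlinarith
      _ ≤ 9 * r ^ (2 - 2 * β) * ρ ^ 2 := by linarith
  calc N ≤ 9 * r ^ (2 - 2 * β) := le_of_mul_le_mul_right hN (by positivity)
    _ ≤ 12 * r ^ (2 - 2 * β) := by gcongr; norm_num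
end

section
/- Let d ∈ ℕ, d ≥ 1, let E ⊆ ℝ^d and let ρ > 0. Suppose that for every x ∈ E and every δ > 0 there exist r ∈ (0,1), t ∈ (0,δ) and N ∈ ℕ satisfying N·t^ρ ≤ r^d, such that B(x,r) ∩ E can be covered by N sets each of diameter at most t. Then the Hausdorff dimension of E is at most ρ. -/
/-!
Hausdorff dimension is countably stable, so it suffices to show `μH[ρ] (E ∩ B(0, n)) < ∞`.
Fix a scale `δ` and the data `r_x, t_x, N_x` of every `x ∈ F := E ∩ B(0, n)`. The Vitali
covering lemma extracts a countable subfamily of points `x` whose balls `B(x, r_x / 4)` are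
disjoint while the balls `B(x, r_x)` still cover `F`. The `N_x` sets covering each `B(x, r_x) ∩ E`
then form a `δ`-cover of `F` with `∑ diam^ρ ≤ ∑ N_x t_x^ρ ≤ ∑ r_x^d = 4^d ∑ (r_x / 4)^d`, and by
disjointness the last sum is at most `vol B(0, n + 1) / vol B(0, 1)`, whatever `δ` is.
-/

open Set Metric MeasureTheory Filter Module
open scoped ENNReal Topology

theorem hausdorffMeasure_le_of_forall_cover {X : Type*} [EMetricSpace X] [MeasurableSpace X]
    [BorelSpace X] {s : ℝ} {C : ℝ≥0∞} {F : Set X}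
    (h : ∀ δ > (0 : ℝ), ∃ (ι : Type*) (_ : Countable ι) (U : ι → Set X),
      F ⊆ ⋃ i, U i ∧ (∀ i, ediam (U i) ≤ ENNReal.ofReal δ) ∧ ∑' i, ediam (U i) ^ s ≤ C) :
    μH[s] F ≤ C := by
  choose ι hι U hcov hdiam hsum using fun n : ℕ => h (1 / (n + 1)) Nat.one_div_pos_of_nat
  have hδ : Tendsto (fun n : ℕ => ENNReal.ofReal (1 / (n + 1))) atTop (𝓝 0) := by
    simpa using ENNReal.tendsto_ofReal tendsto_one_div_add_atTop_nhds_zero_nat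
  calc μH[s] F ≤ liminf (fun n => ∑' i, ediam (U n i) ^ s) atTop :=
        Measure.hausdorffMeasure_le_liminf_tsum s F _ hδ U (.of_forall hdiam) (.of_forall hcov)
    _ ≤ C := liminf_le_of_frequently_le' (.of_forall hsum)

theorem sum_ediam_rpow_le {X : Type*} [PseudoEMetricSpace X] {ι : Type*} [Fintype ι]
    {U : ι → Set X} {s t : ℝ} (hs : 0 ≤ s) (ht : 0 ≤ t)
    (hU : ∀ i, ediam (U i) ≤ ENNReal.ofReal t) :
    ∑ i, ediam (U i) ^ s ≤ ENNReal.ofReal (Fintype.card ι * t ^ s) := by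
  calc ∑ i, ediam (U i) ^ s ≤ ∑ _ : ι, ENNReal.ofReal (t ^ s) :=
        Finset.sum_le_sum fun i _ =>
          (ENNReal.rpow_le_rpow (hU i) hs).trans_eq (ENNReal.ofReal_rpow_of_nonneg ht hs)
    _ = ENNReal.ofReal (Fintype.card ι * t ^ s) := by
        rw [ENNReal.ofReal_mul (by positivity), ENNReal.ofReal_natCast]
        simp

theorem exists_countable_pairwiseDisjoint_ball_cover {α : Type*} [MetricSpace α]
    [TopologicalSpace.SeparableSpace α] (F : Set α) {r : α → ℝ} {R : ℝ}
    (hr : ∀ x ∈ F, 0 < r x) (hR : ∀ x ∈ F, r x ≤ R) :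
    ∃ u ⊆ F, u.Countable ∧ (u.PairwiseDisjoint fun x => ball x (r x / 4)) ∧
      F ⊆ ⋃ x ∈ u, ball x (r x) := by
  obtain ⟨u, huF, hdisj, hcov⟩ :=
    Vitali.exists_disjoint_subfamily_covering_enlargement_ball F id (fun x => r x / 4) (R / 4)
      (fun x hx => by linarith [hR x hx]) 4 (by norm_num)
  refine ⟨u, huF, hdisj.countable_of_isOpen (fun _ _ => isOpen_ball)
    (fun x hx => ⟨x, mem_ball_self (by linarith [hr x (huF hx)])⟩), hdisj, fun x hx => ?_⟩
  obtain ⟨b, hb, hsub⟩ := hcov x hx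
  rw [mul_div_cancel₀ _ four_ne_zero] at hsub
  exact mem_biUnion hb (hsub (mem_ball_self (by linarith [hr x hx])))

section FiniteDimensional

variable {V : Type*} [NormedAddCommGroup V] [NormedSpace ℝ V] [FiniteDimensional ℝ V]
  [MeasurableSpace V] [BorelSpace V]

theorem tsum_ofReal_pow_finrank_mul_le (μ : Measure V) [μ.IsAddHaarMeasure] {u : Set V}
    {r : V → ℝ} {c : V} {R R' : ℝ} (hr : ∀ x ∈ u, r x ∈ Ioc 0 R') (hu : u ⊆ ball c R)
    (hdisj : u.PairwiseDisjoint fun x => ball x (r x)) :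
    (∑' x : u, ENNReal.ofReal (r x ^ finrank ℝ V)) * μ (ball 0 1) ≤ μ (ball c (R + R')) :=
  calc (∑' x : u, ENNReal.ofReal (r x ^ finrank ℝ V)) * μ (ball 0 1)
      = ∑' x : u, μ (ball (x : V) (r x)) := by
        rw [← ENNReal.tsum_mul_right]
        exact tsum_congr fun x => (Measure.addHaar_ball_of_pos μ _ (hr x x.2).1).symm
    _ ≤ μ (⋃ x : u, ball (x : V) (r x)) :=
        tsum_meas_le_meas_iUnion_of_disjoint μ (fun _ => measurableSet_ball) (hdisj.subtype _ _)
    _ ≤ μ (ball c (R + R')) := by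
        refine measure_mono (iUnion_subset fun x => ball_subset_ball' ?_)
        linarith [(hr x x.2).2, mem_ball.1 (hu x.2)]

theorem hausdorffMeasure_le_of_forall_local_cover (μ : Measure V) [μ.IsAddHaarMeasure]
    {E F : Set V} {c : V} {R ρ : ℝ} (hρ : 0 ≤ ρ) (hFE : F ⊆ E) (hF : F ⊆ ball c R)
    (h : ∀ x ∈ F, ∀ δ > (0 : ℝ), ∃ r ∈ Ioo (0 : ℝ) 1, ∃ t ∈ Ioo (0 : ℝ) δ,
      ∃ N : ℕ, (N : ℝ) * t ^ ρ ≤ r ^ finrank ℝ V ∧ ∃ U : Fin N → Set V,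
        ball x r ∩ E ⊆ ⋃ i, U i ∧ ∀ i, ediam (U i) ≤ ENNReal.ofReal t) :
    μH[ρ] F ≤ 4 ^ finrank ℝ V * μ (ball c (R + 1)) / μ (ball 0 1) := by
  refine hausdorffMeasure_le_of_forall_cover fun δ hδ => ?_
  choose! r hr t ht N hN U hU hdiam using fun x hx => h x hx δ hδ
  obtain ⟨u, huF, hu, hdisj, hcov⟩ := exists_countable_pairwiseDisjoint_ball_cover F
    (fun x hx => (hr x hx).1) (fun x hx => (hr x hx).2.le)
  have := hu.to_subtype
  refine ⟨Σ x : u, Fin (N x), inferInstance, fun p : Σ x : u, Fin (N x) => U p.1 p.2, ?_, fun p => ?_, ?_⟩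
  · intro y hy
    obtain ⟨x, hx, hyx⟩ := mem_iUnion₂.1 (hcov hy)
    obtain ⟨i, hi⟩ := mem_iUnion.1 (hU x (huF hx) ⟨hyx, hFE hy⟩)
    exact mem_iUnion.2 ⟨⟨⟨x, hx⟩, i⟩, hi⟩
  · exact (hdiam _ (huF p.1.2) p.2).trans (ENNReal.ofReal_le_ofReal (ht _ (huF p.1.2)).2.le)
  have hpacking := tsum_ofReal_pow_finrank_mul_le μ (r := fun x => r x / 4) (R' := 1)
    (fun x hx => ⟨by linarith [(hr x (huF hx)).1], by linarith [(hr x (huF hx)).2]⟩)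
    (huF.trans hF) hdisj
  calc ∑' p : Σ x : u, Fin (N x), ediam (U p.1 p.2) ^ ρ
      = ∑' x : u, ∑ i, ediam (U x i) ^ ρ := by simp only [ENNReal.tsum_sigma', tsum_fintype]
    _ ≤ ∑' x : u, ENNReal.ofReal (r x ^ finrank ℝ V) := by
        refine ENNReal.tsum_le_tsum fun x => ?_
        have hx := huF x.2
        refine (sum_ediam_rpow_le hρ (ht x hx).1.le (hdiam x hx)).trans ?_
        simpa only [Fintype.card_fin] using ENNReal.ofReal_le_ofReal (hN x hx)
    _ = 4 ^ finrank ℝ V * ∑' x : u, ENNReal.ofReal ((r x / 4) ^ finrank ℝ V) := by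
        rw [← ENNReal.tsum_mul_left]
        refine tsum_congr fun x => ?_
        rw [← ENNReal.ofReal_ofNat 4, ← ENNReal.ofReal_pow zero_le_four,
          ← ENNReal.ofReal_mul (by positivity), ← mul_pow, mul_div_cancel₀ _ four_ne_zero]
    _ ≤ 4 ^ finrank ℝ V * μ (ball c (R + 1)) / μ (ball 0 1) := by
        rw [mul_div_assoc]
        gcongr
        exact ENNReal.le_div_iff_mul_le (.inl (measure_ball_pos μ 0 one_pos).ne')
          (.inl measure_ball_lt_top.ne) |>.2 hpacking

theorem dimH_le_of_forall_local_cover {E : Set V} {ρ : ℝ} (hρ : 0 ≤ ρ)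
    (h : ∀ x ∈ E, ∀ δ > (0 : ℝ), ∃ r ∈ Ioo (0 : ℝ) 1, ∃ t ∈ Ioo (0 : ℝ) δ,
      ∃ N : ℕ, (N : ℝ) * t ^ ρ ≤ r ^ finrank ℝ V ∧ ∃ U : Fin N → Set V,
        ball x r ∩ E ⊆ ⋃ i, U i ∧ ∀ i, ediam (U i) ≤ ENNReal.ofReal t) :
    dimH E ≤ ENNReal.ofReal ρ := by
  have hball (n : ℕ) : dimH (E ∩ ball 0 n) ≤ ENNReal.ofReal ρ := by
    refine dimH_le_of_hausdorffMeasure_ne_top (d := ρ.toNNReal) (ne_top_of_le_ne_top ?_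
      (Real.coe_toNNReal _ hρ ▸ hausdorffMeasure_le_of_forall_local_cover Measure.addHaar hρ
        inter_subset_left inter_subset_right fun x hx => h x hx.1))
    exact ENNReal.div_ne_top (by finiteness) (measure_ball_pos _ 0 one_pos).ne'
  calc dimH E ≤ dimH (⋃ n : ℕ, E ∩ ball 0 n) := by
        rw [← inter_iUnion, iUnion_ball_nat, inter_univ]
    _ = ⨆ n : ℕ, dimH (E ∩ ball 0 n) := dimH_iUnion _
    _ ≤ ENNReal.ofReal ρ := iSup_le hball

end FiniteDimensional

theorem dimH_le_of_covering_general (d : ℕ) (E : Set (EuclideanSpace ℝ (Fin d)))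
    (ρ : ℝ) (hρ : 0 < ρ)
    (h : ∀ x ∈ E, ∀ δ > (0 : ℝ), ∃ r ∈ Set.Ioo (0 : ℝ) 1, ∃ t ∈ Set.Ioo (0 : ℝ) δ,
      ∃ N : ℕ, (N : ℝ) * t ^ ρ ≤ r ^ d ∧
        ∃ U : Fin N → Set (EuclideanSpace ℝ (Fin d)),
          (Metric.ball x r ∩ E ⊆ ⋃ i, U i) ∧
          ∀ i, EMetric.diam (U i) ≤ ENNReal.ofReal t) :
    dimH E ≤ ENNReal.ofReal ρ :=
  dimH_le_of_forall_local_cover hρ.le (by rw [finrank_euclideanSpace_fin]; exact h)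

/-- If every point `x` of `E ⊆ ℝ^d` admits, for every `δ > 0`, radii `r ∈ (0,1)`,
`t ∈ (0,δ)` and `N ∈ ℕ` with `N·t^ρ ≤ r^d` such that `B(x,r) ∩ E` can be covered by
`N` sets of diameter at most `t`, then the Hausdorff dimension of `E` is at most `ρ`. -/
theorem dimH_le_of_covering (d : ℕ) (hd : 1 ≤ d) (E : Set (EuclideanSpace ℝ (Fin d)))
    (ρ : ℝ) (hρ : 0 < ρ)
    (h : ∀ x ∈ E, ∀ δ > (0 : ℝ), ∃ r ∈ Set.Ioo (0 : ℝ) 1, ∃ t ∈ Set.Ioo (0 : ℝ) δ,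
      ∃ N : ℕ, (N : ℝ) * t ^ ρ ≤ r ^ d ∧
        ∃ U : Fin N → Set (EuclideanSpace ℝ (Fin d)),
          (Metric.ball x r ∩ E ⊆ ⋃ i, U i) ∧
          ∀ i, EMetric.diam (U i) ≤ ENNReal.ofReal t) :
    dimH E ≤ ENNReal.ofReal ρ :=
  dimH_le_of_covering_general d E ρ hρ h
end

section
/- Let d ∈ ℕ, d ≥ 1, let Ω ⊆ ℝ^d be open, and let f : Ω → ℝ^d be differentiable on Ω. Let B ⊆ Ω be a Lebesgue measurable set with 0 < meas(B) < ∞ on which f is injective, and let A ⊆ B be measurable. Suppose there are constants 0 < m ≤ M such that for every x ∈ B the derivative Df(x) satisfies ℓ(Df(x)) ≥ m and ‖Df(x)‖ ≤ M. Then (m/M)^d · meas(A)/meas(B) ≤ meas(f(A))/meas(f(B)) ≤ (M/m)^d · meas(A)/meas(B). -/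
/-!
By the change of variables formula, `meas(f(S)) = ∫_S |det Df|` for every measurable `S ⊆ B`.
Comparing volumes of unit balls and their images shows `m^d ≤ |det Df(x)| ≤ M^d` on `B`, so
`m^d meas(S) ≤ meas(f(S)) ≤ M^d meas(S)` for `S = A` and `S = B`, and dividing these estimates
gives the two bounds.
-/

open MeasureTheory Set Metric Module

lemma ContinuousLinearMap.mul_norm_le_norm_apply_of_norm_eq_one {E F : Type*}
    [NormedAddCommGroup E] [NormedSpace ℝ E] [NormedAddCommGroup F] [NormedSpace ℝ F]
    (L : E →L[ℝ] F) {m : ℝ} (h : ∀ x, ‖x‖ = 1 → m ≤ ‖L x‖) (x : E) :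
    m * ‖x‖ ≤ ‖L x‖ := by
  rcases eq_or_ne x 0 with rfl | hx
  · simp
  have hx' : 0 < ‖x‖ := norm_pos_iff.mpr hx
  have hunit : ‖‖x‖⁻¹ • x‖ = 1 := by
    rw [norm_smul, norm_inv, norm_norm, inv_mul_cancel₀ hx'.ne']
  have := h _ hunit
  rw [L.map_smul, norm_smul, norm_inv, norm_norm, le_inv_mul_iff₀ hx'] at this
  linarith

section Determinant

variable {E : Type*} [NormedAddCommGroup E] [NormedSpace ℝ E] [FiniteDimensional ℝ E]

lemma ContinuousLinearMap.pow_finrank_le_abs_det_of_closedBall_subset (L : E →L[ℝ] E) {r : ℝ}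
    (hr : 0 ≤ r) (h : closedBall 0 r ⊆ L '' closedBall 0 1) :
    r ^ finrank ℝ E ≤ |L.det| := by
  let : MeasurableSpace E := borel E
  have : BorelSpace E := ⟨rfl⟩
  have hvol := measure_mono (μ := Measure.addHaar) h
  rw [Measure.addHaar_closedBall' _ _ hr, Measure.addHaar_image_continuousLinearMap,
    ENNReal.mul_le_mul_iff_left (measure_closedBall_pos _ _ one_pos).ne'
      measure_closedBall_lt_top.ne] at hvol
  exact (ENNReal.ofReal_le_ofReal_iff (abs_nonneg _)).mp hvol

lemma ContinuousLinearMap.abs_det_le_pow_finrank_of_subset_closedBall (L : E →L[ℝ] E) {r : ℝ}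
    (hr : 0 ≤ r) (h : L '' closedBall 0 1 ⊆ closedBall 0 r) :
    |L.det| ≤ r ^ finrank ℝ E := by
  let : MeasurableSpace E := borel E
  have : BorelSpace E := ⟨rfl⟩
  have hvol := measure_mono (μ := Measure.addHaar) h
  rw [Measure.addHaar_closedBall' _ _ hr, Measure.addHaar_image_continuousLinearMap,
    ENNReal.mul_le_mul_iff_left (measure_closedBall_pos _ _ one_pos).ne'
      measure_closedBall_lt_top.ne] at hvol
  exact (ENNReal.ofReal_le_ofReal_iff (by positivity)).mp hvol

lemma ContinuousLinearMap.abs_det_le_opNorm_pow (L : E →L[ℝ] E) :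
    |L.det| ≤ ‖L‖ ^ finrank ℝ E := by
  refine L.abs_det_le_pow_finrank_of_subset_closedBall (norm_nonneg L) ?_
  rintro _ ⟨x, hx, rfl⟩
  rw [mem_closedBall_zero_iff] at hx ⊢
  simpa using L.le_opNorm_of_le hx

lemma ContinuousLinearMap.pow_finrank_le_abs_det {L : E →L[ℝ] E} {m : ℝ} (hm : 0 < m)
    (hL : ∀ x, m * ‖x‖ ≤ ‖L x‖) : m ^ finrank ℝ E ≤ |L.det| := by
  have hinj : Function.Injective L := by
    refine (injective_iff_map_eq_zero L).mpr fun x hx => norm_le_zero_iff.mp ?_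
    have := hL x
    rw [hx, norm_zero] at this
    nlinarith [norm_nonneg x]
  have hsurj : Function.Surjective L :=
    LinearMap.injective_iff_surjective (f := (L : E →ₗ[ℝ] E)) |>.mp hinj
  refine L.pow_finrank_le_abs_det_of_closedBall_subset hm.le fun y hy => ?_
  obtain ⟨x, rfl⟩ := hsurj y
  refine ⟨x, ?_, rfl⟩
  rw [mem_closedBall_zero_iff] at hy ⊢
  nlinarith [hL x]

end Determinant

section ChangeOfVariables

variable {E : Type*} [NormedAddCommGroup E] [NormedSpace ℝ E] [FiniteDimensional ℝ E]
  [MeasurableSpace E] [BorelSpace E] (μ : Measure E) [μ.IsAddHaarMeasure]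
  {f : E → E} {f' : E → E →L[ℝ] E} {s : Set E}

lemma ofReal_mul_le_addHaar_image_of_le_abs_det (hs : MeasurableSet s)
    (hf' : ∀ x ∈ s, HasFDerivWithinAt f (f' x) s x) (hf : InjOn f s) {c : ℝ}
    (hc : ∀ x ∈ s, c ≤ |(f' x).det|) :
    ENNReal.ofReal c * μ s ≤ μ (f '' s) := by
  rw [← lintegral_abs_det_fderiv_eq_addHaar_image μ hs hf' hf, ← setLIntegral_const]
  exact setLIntegral_mono' hs fun x hx => ENNReal.ofReal_le_ofReal (hc x hx)

lemma addHaar_image_le_ofReal_mul_of_abs_det_le (hs : MeasurableSet s)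
    (hf' : ∀ x ∈ s, HasFDerivWithinAt f (f' x) s x) {C : ℝ}
    (hC : ∀ x ∈ s, |(f' x).det| ≤ C) :
    μ (f '' s) ≤ ENNReal.ofReal C * μ s := by
  refine (addHaar_image_le_lintegral_abs_det_fderiv μ hs hf').trans ?_
  rw [← setLIntegral_const]
  exact setLIntegral_mono' hs fun x hx => ENNReal.ofReal_le_ofReal (hC x hx)

end ChangeOfVariables

lemma ENNReal.toReal_bounds_of_ofReal_mul_bounds {a b : ENNReal} (ha : a ≠ ⊤) {c C : ℝ}
    (hc : 0 ≤ c) (hC : 0 ≤ C) (h : ENNReal.ofReal c * a ≤ b ∧ b ≤ ENNReal.ofReal C * a) :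
    c * a.toReal ≤ b.toReal ∧ b.toReal ≤ C * a.toReal := by
  have hb : b ≠ ⊤ := ne_top_of_le_ne_top (ENNReal.mul_ne_top ENNReal.ofReal_ne_top ha) h.2
  constructor
  · simpa [ENNReal.toReal_mul, ENNReal.toReal_ofReal hc] using ENNReal.toReal_mono hb h.1
  · simpa [ENNReal.toReal_mul, ENNReal.toReal_ofReal hC] using
      ENNReal.toReal_mono (ENNReal.mul_ne_top ENNReal.ofReal_ne_top ha) h.2

lemma div_bounds_of_mul_bounds {a b a' b' c C : ℝ} (hc : 0 < c) (hb : 0 < b) (ha : 0 ≤ a)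
    (ha' : c * a ≤ a' ∧ a' ≤ C * a) (hb' : c * b ≤ b' ∧ b' ≤ C * b) :
    c / C * (a / b) ≤ a' / b' ∧ a' / b' ≤ C / c * (a / b) := by
  have hb'pos : 0 < b' := by nlinarith
  have hC : 0 < C := by nlinarith
  have ha'0 : 0 ≤ a' := by nlinarith
  constructor
  · rw [div_mul_div_comm, div_le_div_iff₀ (by positivity) hb'pos]
    nlinarith [mul_le_mul_of_nonneg_right ha'.1 hb'pos.le, mul_le_mul_of_nonneg_left hb'.2 ha'0]
  · rw [div_mul_div_comm, div_le_div_iff₀ hb'pos (by positivity)]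
    nlinarith [mul_le_mul_of_nonneg_left hb'.1 ha'0, mul_le_mul_of_nonneg_right ha'.2 hb'pos.le]

theorem density_distortion_general (d : ℕ)
    (Ω : Set (EuclideanSpace ℝ (Fin d)))
    (f : EuclideanSpace ℝ (Fin d) → EuclideanSpace ℝ (Fin d))
    (Df : EuclideanSpace ℝ (Fin d) → EuclideanSpace ℝ (Fin d) →L[ℝ] EuclideanSpace ℝ (Fin d))
    (hf : ∀ x ∈ Ω, HasFDerivAt f (Df x) x)
    (B : Set (EuclideanSpace ℝ (Fin d))) (hBΩ : B ⊆ Ω) (hBmeas : MeasurableSet B)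
    (hB0 : 0 < volume B) (hBfin : volume B < ⊤)
    (hinj : Set.InjOn f B)
    (A : Set (EuclideanSpace ℝ (Fin d))) (hAB : A ⊆ B) (hAmeas : MeasurableSet A)
    (m M : ℝ) (hm : 0 < m) (hmM : m ≤ M)
    (hlow : ∀ x ∈ B, ∀ h : EuclideanSpace ℝ (Fin d), ‖h‖ = 1 → m ≤ ‖Df x h‖)
    (hupp : ∀ x ∈ B, ‖Df x‖ ≤ M) :
    (m / M) ^ d * ((volume A).toReal / (volume B).toReal) ≤
        (volume (f '' A)).toReal / (volume (f '' B)).toReal ∧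
      (volume (f '' A)).toReal / (volume (f '' B)).toReal ≤
        (M / m) ^ d * ((volume A).toReal / (volume B).toReal) := by
  have hM : 0 < M := hm.trans_le hmM
  have hdim : finrank ℝ (EuclideanSpace ℝ (Fin d)) = d := finrank_euclideanSpace_fin
  have hdet : ∀ x ∈ B, m ^ d ≤ |(Df x).det| ∧ |(Df x).det| ≤ M ^ d := fun x hx => by
    have hlow' := (Df x).pow_finrank_le_abs_det hm
      ((Df x).mul_norm_le_norm_apply_of_norm_eq_one (hlow x hx))
    have hupp' := (Df x).abs_det_le_opNorm_pow.trans
      (pow_le_pow_left₀ (norm_nonneg _) (hupp x hx) _)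
    rw [hdim] at hlow' hupp'
    exact ⟨hlow', hupp'⟩
  have hvol : ∀ S ⊆ B, MeasurableSet S →
      m ^ d * (volume S).toReal ≤ (volume (f '' S)).toReal ∧
        (volume (f '' S)).toReal ≤ M ^ d * (volume S).toReal := fun S hSB hS => by
    have hf' : ∀ x ∈ S, HasFDerivWithinAt f (Df x) S x := fun x hx =>
      (hf x (hBΩ (hSB hx))).hasFDerivWithinAt
    exact ENNReal.toReal_bounds_of_ofReal_mul_bounds (measure_ne_top_of_subset hSB hBfin.ne)
      (by positivity) (by positivity)
      ⟨ofReal_mul_le_addHaar_image_of_le_abs_det volume hS hf' (hinj.mono hSB)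
          fun x hx => (hdet x (hSB hx)).1,
        addHaar_image_le_ofReal_mul_of_abs_det_le volume hS hf'
          fun x hx => (hdet x (hSB hx)).2⟩
  rw [div_pow, div_pow]
  exact div_bounds_of_mul_bounds (by positivity) (ENNReal.toReal_pos hB0.ne' hBfin.ne)
    ENNReal.toReal_nonneg (hvol A hAB hAmeas) (hvol B subset_rfl hBmeas)

/-- Density distortion under a differentiable injective map with two-sided bounds on
the derivative: if `ℓ(Df(x)) ≥ m` and `‖Df(x)‖ ≤ M` on a measurable set `B ⊆ Ω` of
positive finite measure on which `f` is injective, and `A ⊆ B` is measurable, then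
`(m/M)^d · meas(A)/meas(B) ≤ meas(f(A))/meas(f(B)) ≤ (M/m)^d · meas(A)/meas(B)`. -/
theorem density_distortion (d : ℕ) (hd : 1 ≤ d)
    (Ω : Set (EuclideanSpace ℝ (Fin d))) (hΩ : IsOpen Ω)
    (f : EuclideanSpace ℝ (Fin d) → EuclideanSpace ℝ (Fin d))
    (Df : EuclideanSpace ℝ (Fin d) → EuclideanSpace ℝ (Fin d) →L[ℝ] EuclideanSpace ℝ (Fin d))
    (hf : ∀ x ∈ Ω, HasFDerivAt f (Df x) x)
    (B : Set (EuclideanSpace ℝ (Fin d))) (hBΩ : B ⊆ Ω) (hBmeas : MeasurableSet B)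
    (hB0 : 0 < volume B) (hBfin : volume B < ⊤)
    (hinj : Set.InjOn f B)
    (A : Set (EuclideanSpace ℝ (Fin d))) (hAB : A ⊆ B) (hAmeas : MeasurableSet A)
    (m M : ℝ) (hm : 0 < m) (hmM : m ≤ M)
    (hlow : ∀ x ∈ B, ∀ h : EuclideanSpace ℝ (Fin d), ‖h‖ = 1 → m ≤ ‖Df x h‖)
    (hupp : ∀ x ∈ B, ‖Df x‖ ≤ M) :
    (m / M) ^ d * ((volume A).toReal / (volume B).toReal) ≤
        (volume (f '' A)).toReal / (volume (f '' B)).toReal ∧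
      (volume (f '' A)).toReal / (volume (f '' B)).toReal ≤
        (M / m) ^ d * ((volume A).toReal / (volume B).toReal) :=
  density_distortion_general d Ω f Df hf B hBΩ hBmeas hB0 hBfin hinj A hAB hAmeas m M hm hmM hlow
    hupp
end

section
/- Let (a_j)_{j≥1} be a sequence of real numbers with a_j > 1 for all j, and suppose that for every C > 1 there exists M ∈ ℕ such that a_j ≥ a_{j−1}^C for all j > M. Then for every δ > 0 there exists N ∈ ℕ such that ∏_{j=1}^{m−1} a_j ≤ a_m^δ for all m ≥ N. -/
/-!
Pass to logarithms `b j = log (a j)`: the hypothesis becomes `C * b j ≤ b (j + 1)` for large `j`.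
Then the tail `∑_{n ≤ j < m} b j` is at most `b m / (C - 1)`, since adding `b m` to a sum bounded
by `b m / (C - 1)` gives at most `C * b m / (C - 1) ≤ b (m + 1) / (C - 1)`. With `C = 1 + 2 / δ`
this is `δ / 2 * b m`, and the finitely many earlier terms are a constant, which is also at most
`δ / 2 * b m` for large `m` because `b` grows geometrically.
-/

open Filter Finset

section

variable {b : ℕ → ℝ} {C : ℝ} {n : ℕ}

lemma sum_Ico_le_div_sub_one_of_mul_le (hC : 1 < C) (hn : 0 ≤ b n)
    (hb : ∀ j, n ≤ j → C * b j ≤ b (j + 1)) {m : ℕ} (hm : n ≤ m) :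
    ∑ j ∈ Ico n m, b j ≤ b m / (C - 1) := by
  have hC' : 0 < C - 1 := sub_pos.2 hC
  induction m, hm using Nat.le_induction with
  | base => simpa using div_nonneg hn hC'.le
  | succ m hnm ih =>
    rw [sum_Ico_succ_top hnm]
    calc ∑ j ∈ Ico n m, b j + b m ≤ b m / (C - 1) + b m := by gcongr
      _ = C * b m / (C - 1) := by field_simp; ring
      _ ≤ b (m + 1) / (C - 1) := by gcongr; exact hb m hnm

lemma tendsto_atTop_of_geom_le_of_le (hC : 1 < C) (hn : 0 < b n)
    (hb : ∀ j, n ≤ j → C * b j ≤ b (j + 1)) : Tendsto b atTop atTop :=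
  (tendsto_add_atTop_iff_nat n).1 <| tendsto_atTop_of_geom_le (by simpa using hn) hC fun k => by
    simpa [add_right_comm] using hb (k + n) (Nat.le_add_left n k)

theorem eventually_sum_Ico_le_mul_of_forall_eventually_mul_le (k : ℕ)
    (hpos : ∀ᶠ j in atTop, 0 < b j) (hgrow : ∀ C, 1 < C → ∀ᶠ j in atTop, C * b j ≤ b (j + 1))
    {δ : ℝ} (hδ : 0 < δ) : ∀ᶠ m in atTop, ∑ j ∈ Ico k m, b j ≤ δ * b m := by
  have hC : 1 < 1 + 2 / δ := lt_add_of_pos_right 1 (by positivity)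
  obtain ⟨n, hn⟩ := eventually_atTop.1 <|
    (hpos.and (hgrow _ hC)).and (eventually_ge_atTop k)
  have hb : ∀ j, n ≤ j → (1 + 2 / δ) * b j ≤ b (j + 1) := fun j hj => (hn j hj).1.2
  have htail : ∀ m, n ≤ m → ∑ j ∈ Ico n m, b j ≤ δ / 2 * b m := fun m hm => by
    calc ∑ j ∈ Ico n m, b j ≤ b m / (1 + 2 / δ - 1) :=
          sum_Ico_le_div_sub_one_of_mul_le hC (hn n le_rfl).1.1.le hb hm
      _ = δ / 2 * b m := by field_simp; ring
  have hhead : ∀ᶠ m in atTop, ∑ j ∈ Ico k n, b j ≤ δ / 2 * b m :=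
    ((tendsto_atTop_of_geom_le_of_le hC (hn n le_rfl).1.1 hb).const_mul_atTop
      (half_pos hδ)).eventually_ge_atTop _
  filter_upwards [hhead, eventually_ge_atTop n] with m hhead hm
  rw [← sum_Ico_consecutive _ (hn n le_rfl).2 hm]
  linarith [htail m hm]

end

/-- If `a_j > 1` for `j ≥ 1` and for every `C > 1` one has `a_j ≥ a_{j-1}^C` for all
sufficiently large `j`, then for every `δ > 0` the product `∏_{j=1}^{m-1} a_j` is at
most `a_m^δ` for all sufficiently large `m`. -/
theorem prod_le_rpow_of_fast_growth (a : ℕ → ℝ) (ha : ∀ j, 1 ≤ j → 1 < a j)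
    (hgrow : ∀ C : ℝ, 1 < C → ∃ M : ℕ, 1 ≤ M ∧ ∀ j, M < j → a (j - 1) ^ C ≤ a j) :
    ∀ δ : ℝ, 0 < δ → ∃ N : ℕ, ∀ m, N ≤ m →
      (∏ j ∈ Finset.Icc 1 (m - 1), a j) ≤ a m ^ δ := by
  intro δ hδ
  have ha_pos : ∀ j, 1 ≤ j → 0 < a j := fun j hj => one_pos.trans (ha j hj)
  have hlog_grow : ∀ C : ℝ, 1 < C → ∀ᶠ j in atTop, C * Real.log (a j) ≤ Real.log (a (j + 1)) := by
    intro C hC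
    obtain ⟨M, hM1, hM⟩ := hgrow C hC
    filter_upwards [eventually_ge_atTop M] with j hj
    have hj_pos := ha_pos j (hM1.trans hj)
    rw [← Real.log_rpow hj_pos]
    exact Real.log_le_log (by positivity) (by simpa using hM (j + 1) (by omega))
  obtain ⟨N, hN⟩ := eventually_atTop.1 <| eventually_sum_Ico_le_mul_of_forall_eventually_mul_le 1
    (eventually_atTop.2 ⟨1, fun j hj => Real.log_pos (ha j hj)⟩) hlog_grow hδ
  refine ⟨max N 1, fun m hm => ?_⟩
  have hm1 : 1 ≤ m := le_of_max_le_right hm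
  have hIcc : Icc 1 (m - 1) = Ico 1 m := by ext j; simp only [mem_Icc, mem_Ico]; omega
  have hfactor_pos : ∀ j ∈ Ico 1 m, 0 < a j := fun j hj => ha_pos j (mem_Ico.1 hj).1
  rw [hIcc, ← Real.log_le_log_iff (prod_pos hfactor_pos) (by have := ha_pos m hm1; positivity),
    Real.log_prod fun j hj => (hfactor_pos j hj).ne', Real.log_rpow (ha_pos m hm1)]
  exact hN m (le_of_max_le_left hm)
end
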